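/- arXiv:1306.1258 — 7 statements merged into one kernel-verified Lean document; each statement's English description precedes it below -/
import Mathlib

section
/- Let V be a finite-dimensional complex inner product space, let Δ > 0, and let W : ℝ → ℝ be an integrable function, odd on ℝ ∖ {0}, such that ∫_ℝ W(t) e^{i t λ} dt = i/λ for every real λ with |λ| ≥ Δ. Let H be a self-adjoint operator on V whose lowest eigenvalue E0 is simple with unit eigenvector ψ0, and whose every other eigenvalue E satisfies E − E0 ≥ Δ. Let A be any operator on V and define S(H, A) = ∫_ℝ W(t) e^{itH} A e^{−itH} dt. Then: (i) for every eigenvector φ of H with eigenvalue E ≠ E0, ⟨φ, S(H, A) ψ0⟩ = (i/(E − E0)) ⟨φ, A ψ0⟩; and (ii) ⟨ψ0, S(H, A) ψ0⟩ = 0. -/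
/-!
The Heisenberg evolution `e^{itH} A e^{-itH}` is unitarily conjugate to `A`, hence has norm
`‖A‖`, so the integral defining `S(H, A)` converges. Between eigenvectors of `H` with eigenvalues
`E` and `E'` its matrix element is `e^{it(E - E')} ⟪φ, A ψ⟫`, so integrating against `W` produces
the Fourier transform of `W` at `E - E'`: by the gap this is `i / (E - E0)` off the ground state,
and on the ground state (`E = E' = E0`) it is `∫ W = 0` because `W` is odd.
-/

open MeasureTheory
open scoped ComplexInnerProductSpace

theorem NormedSpace.exp_apply_of_apply_eq_smul {𝕂 V : Type*} [RCLike 𝕂] [NormedAddCommGroup V]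
    [NormedSpace 𝕂 V] [CompleteSpace V] {T : V →L[𝕂] V} {x : V} {μ : 𝕂} (h : T x = μ • x) :
    exp T x = exp μ • x := by
  have hpow (n : ℕ) : (T ^ n) x = μ ^ n • x := by
    induction n with
    | zero => simp
    | succ n ih => rw [pow_succ', mul_apply_eq_comp, ih, map_smul, h, smul_smul, pow_succ]
  have hT := (exp_series_hasSum_exp' (𝕂 := 𝕂) T).mapL (ContinuousLinearMap.apply 𝕂 V x)
  have hμ := (exp_series_hasSum_exp' (𝕂 := 𝕂) μ).smul_const x
  simp only [ContinuousLinearMap.apply_apply, smul_apply, hpow, smul_smul, smul_eq_mul] at hT hμ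
  exact hT.unique hμ

theorem integral_eq_zero_of_ae_neg_eq_neg {G E : Type*} [MeasurableSpace G] [AddGroup G]
    [MeasurableNeg G] [NormedAddCommGroup E] [NormedSpace ℝ E] {μ : Measure G} [μ.IsNegInvariant]
    {f : G → E} (hf : ∀ᵐ x ∂μ, f (-x) = -f x) : ∫ x, f x ∂μ = 0 := by
  have h := (integral_neg_eq_self f μ).symm.trans ((integral_congr_ae hf).trans (integral_neg f))
  rw [eq_neg_iff_add_eq_zero, ← two_smul ℝ, smul_eq_zero] at h
  exact h.resolve_left two_ne_zero

section Hilbert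

variable {V : Type*} [NormedAddCommGroup V] [InnerProductSpace ℂ V] [CompleteSpace V]
  {H : V →L[ℂ] V}

theorem IsSelfAdjoint.adjoint_exp_smul (hH : IsSelfAdjoint H) (c : ℂ) :
    ContinuousLinearMap.adjoint (NormedSpace.exp (c • H)) = NormedSpace.exp (star c • H) := by
  rw [← ContinuousLinearMap.star_eq_adjoint, NormedSpace.star_exp, star_smul, hH.star_eq]

theorem IsSelfAdjoint.exp_smul_mem_unitary (hH : IsSelfAdjoint H) {c : ℂ}
    (hc : c ∈ skewAdjoint ℂ) : NormedSpace.exp (c • H) ∈ unitary (V →L[ℂ] V) :=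
  -- the library lemma is stated for normed `ℚ`-algebras
  letI : NormedAlgebra ℚ (V →L[ℂ] V) := NormedAlgebra.restrictScalars ℚ ℂ _
  NormedSpace.exp_mem_unitary_of_mem_skewAdjoint (hH.smul_mem_skewAdjoint hc)

theorem Complex.I_mul_ofReal_mem_skewAdjoint (t : ℝ) : Complex.I * t ∈ skewAdjoint ℂ := by
  simp [skewAdjoint.mem_iff, Complex.conj_ofReal]

noncomputable def heisenbergEvolution (H A : V →L[ℂ] V) (t : ℝ) : V →L[ℂ] V :=
  NormedSpace.exp ((Complex.I * t) • H) * A * NormedSpace.exp ((-(Complex.I * t)) • H)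

theorem norm_heisenbergEvolution (hH : IsSelfAdjoint H) (A : V →L[ℂ] V) (t : ℝ) :
    ‖heisenbergEvolution H A t‖ = ‖A‖ := by
  have hc := Complex.I_mul_ofReal_mem_skewAdjoint t
  rw [heisenbergEvolution, CStarRing.norm_mul_mem_unitary _ (hH.exp_smul_mem_unitary
    (neg_mem hc)), CStarRing.norm_mem_unitary_mul _ (hH.exp_smul_mem_unitary hc)]

theorem continuous_heisenbergEvolution (H A : V →L[ℂ] V) :
    Continuous (heisenbergEvolution H A) := by
  let : NormedAlgebra ℚ (V →L[ℂ] V) := NormedAlgebra.restrictScalars ℚ ℂ _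
  unfold heisenbergEvolution
  fun_prop

theorem inner_heisenbergEvolution_apply (hH : IsSelfAdjoint H) (A : V →L[ℂ] V) (t : ℝ)
    {E E' : ℝ} {φ ψ : V} (hφ : H φ = (E : ℂ) • φ) (hψ : H ψ = (E' : ℂ) • ψ) :
    ⟪φ, heisenbergEvolution H A t ψ⟫ = Complex.exp (Complex.I * t * (E - E')) * ⟪φ, A ψ⟫ := by
  have hexp {μ : ℝ} {x : V} (hx : H x = (μ : ℂ) • x) :
      NormedSpace.exp ((-(Complex.I * t)) • H) x = Complex.exp (-(Complex.I * t) * μ) • x := by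
    rw [Complex.exp_eq_exp_ℂ]
    exact NormedSpace.exp_apply_of_apply_eq_smul (by rw [smul_apply, hx, smul_smul])
  have hstar : star (Complex.I * t) = -(Complex.I * t) := Complex.I_mul_ofReal_mem_skewAdjoint t
  rw [heisenbergEvolution, mul_apply_eq_comp, mul_apply_eq_comp, hexp hψ,
    ← ContinuousLinearMap.adjoint_inner_left, hH.adjoint_exp_smul, hstar, hexp hφ,
    inner_smul_left, map_smul, inner_smul_right, ← Complex.exp_conj, ← mul_assoc, ← Complex.exp_add]
  congr 2
  simp only [map_mul, map_neg, Complex.conj_I, Complex.conj_ofReal]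
  ring

theorem integrable_smul_heisenbergEvolution (hH : IsSelfAdjoint H) {W : ℝ → ℝ} (hW : Integrable W)
    (A : V →L[ℂ] V) : Integrable fun t => W t • heisenbergEvolution H A t :=
  hW.smul_bdd ‖A‖ (continuous_heisenbergEvolution H A).aestronglyMeasurable
    (ae_of_all _ fun t => (norm_heisenbergEvolution hH A t).le)

theorem inner_integral_smul_heisenbergEvolution_apply (hH : IsSelfAdjoint H) {W : ℝ → ℝ}
    (hW : Integrable W) (A : V →L[ℂ] V) {E E' : ℝ} {φ ψ : V} (hφ : H φ = (E : ℂ) • φ)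
    (hψ : H ψ = (E' : ℂ) • ψ) :
    ⟪φ, (∫ t, W t • heisenbergEvolution H A t) ψ⟫
      = (∫ t : ℝ, (W t : ℂ) * Complex.exp (Complex.I * t * (E - E'))) * ⟪φ, A ψ⟫ := by
  have hint := integrable_smul_heisenbergEvolution hH hW A
  rw [ContinuousLinearMap.integral_apply hint, ← integral_inner (hint.apply_continuousLinearMap ψ),
    ← integral_mul_const]
  congr 1 with t
  rw [smul_apply, ← Complex.coe_smul, inner_smul_right,
    inner_heisenbergEvolution_apply hH A t hφ hψ]
  exact (mul_assoc _ _ _).symm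

end Hilbert

theorem quasi_adiabatic_generator_matrix_elements_general
    {V : Type*} [NormedAddCommGroup V] [InnerProductSpace ℂ V] [FiniteDimensional ℂ V]
    (Δ : ℝ) (W : ℝ → ℝ)
    (hWint : MeasureTheory.Integrable W)
    (hWodd : ∀ t : ℝ, t ≠ 0 → W (-t) = -W t)
    (hWfourier : ∀ l : ℝ, Δ ≤ |l| →
      ∫ t : ℝ, (W t : ℂ) * Complex.exp (Complex.I * t * l) = Complex.I / l)
    (H : V →L[ℂ] V) (hH : IsSelfAdjoint H)
    (E0 : ℝ) (ψ0 : V) (heig : H ψ0 = (E0 : ℂ) • ψ0)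
    (hgap : ∀ μ : ℝ, (∃ v : V, v ≠ 0 ∧ H v = (μ : ℂ) • v) → μ = E0 ∨ Δ ≤ μ - E0)
    (A : V →L[ℂ] V) (S : V →L[ℂ] V)
    (hS : S = ∫ t : ℝ, W t • (NormedSpace.exp ((Complex.I * t) • H) * A *
      NormedSpace.exp ((-(Complex.I * t)) • H))) :
    (∀ (φ : V) (E : ℝ), φ ≠ 0 → E ≠ E0 → H φ = (E : ℂ) • φ →
      ⟪φ, S ψ0⟫ = (Complex.I / ((E : ℂ) - (E0 : ℂ))) * ⟪φ, A ψ0⟫) ∧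
    ⟪ψ0, S ψ0⟫ = 0 := by
  replace hS : S = ∫ t, W t • heisenbergEvolution H A t := hS
  constructor
  · intro φ E hφ hE heigφ
    have hgapE : Δ ≤ |E - E0| := ((hgap E ⟨φ, hφ, heigφ⟩).resolve_left hE).trans (le_abs_self _)
    have hfourier := hWfourier (E - E0) hgapE
    push_cast at hfourier
    rw [hS, inner_integral_smul_heisenbergEvolution_apply hH hWint A heigφ heig, hfourier]
  · rw [hS, inner_integral_smul_heisenbergEvolution_apply hH hWint A heig heig]
    simp only [sub_self, mul_zero, Complex.exp_zero, mul_one]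
    rw [integral_eq_zero_of_ae_neg_eq_neg, zero_mul]
    filter_upwards [Measure.ae_ne volume 0] with t ht
    rw [hWodd t ht, Complex.ofReal_neg]

/-- Matrix elements of the quasi-adiabatic generator
`S(H, A) = ∫ W(t) e^{itH} A e^{-itH} dt`: for an eigenvector `φ` with eigenvalue
`E ≠ E0` one has `⟪φ, S ψ0⟫ = (i/(E - E0)) ⟪φ, A ψ0⟫`, and `⟪ψ0, S ψ0⟫ = 0`. -/
theorem quasi_adiabatic_generator_matrix_elements
    {V : Type*} [NormedAddCommGroup V] [InnerProductSpace ℂ V] [FiniteDimensional ℂ V]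
    (Δ : ℝ) (hΔ : 0 < Δ) (W : ℝ → ℝ)
    (hWint : MeasureTheory.Integrable W)
    (hWodd : ∀ t : ℝ, t ≠ 0 → W (-t) = -W t)
    (hWfourier : ∀ l : ℝ, Δ ≤ |l| →
      ∫ t : ℝ, (W t : ℂ) * Complex.exp (Complex.I * t * l) = Complex.I / l)
    (H : V →L[ℂ] V) (hH : IsSelfAdjoint H)
    (E0 : ℝ) (ψ0 : V) (hψ0 : ‖ψ0‖ = 1) (heig : H ψ0 = (E0 : ℂ) • ψ0)
    (hsimple : ∀ v : V, H v = (E0 : ℂ) • v → ∃ c : ℂ, v = c • ψ0)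
    (hgap : ∀ μ : ℝ, (∃ v : V, v ≠ 0 ∧ H v = (μ : ℂ) • v) → μ = E0 ∨ Δ ≤ μ - E0)
    (A : V →L[ℂ] V) (S : V →L[ℂ] V)
    (hS : S = ∫ t : ℝ, W t • (NormedSpace.exp ((Complex.I * t) • H) * A *
      NormedSpace.exp ((-(Complex.I * t)) • H))) :
    (∀ (φ : V) (E : ℝ), φ ≠ 0 → E ≠ E0 → H φ = (E : ℂ) • φ →
      ⟪φ, S ψ0⟫ = (Complex.I / ((E : ℂ) - (E0 : ℂ))) * ⟪φ, A ψ0⟫) ∧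
    ⟪ψ0, S ψ0⟫ = 0 :=
  quasi_adiabatic_generator_matrix_elements_general Δ W hWint hWodd hWfourier H hH E0 ψ0 heig hgap A
    S hS
end

section
/- Let V be a finite-dimensional complex inner product space, ψ ∈ V a unit vector with rank-one projection P = |ψ⟩⟨ψ|, and let U₁, …, U_m be operators on V (m ≥ 1). For 1 ≤ i ≤ m set p_i = ⟨ψ, U_i ψ⟩, and for 1 ≤ i ≤ m − 1 set q_i = ⟨ψ, U_m U_{m−1} ⋯ U_{i+1} (I − P) U_i ψ⟩. Then ⟨ψ, U_m U_{m−1} ⋯ U₁ ψ⟩ − ∏_{i=1}^{m} p_i = ∑_{i=1}^{m−1} ( ∏_{j=1}^{i−1} p_j ) q_i. -/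
open scoped ComplexInnerProductSpace

/-!
Peeling off the first factor and splitting `U a ψ` into its component along `ψ` and the
orthogonal remainder gives the affine recurrence `L a = p a * L (a + 1) + q a` for
`L a = ⟪ψ, U_m ⋯ U_{a+1} ψ⟫`; unrolling it down to `L (m - 1) = p (m - 1)` is the identity.
-/

/-- The ordered product `U (b-1) * U (b-2) * ⋯ * U a` of operators (acting as the
composition which applies `U a` first). Empty if `b ≤ a`. -/
noncomputable def ordProd {V : Type*} [NormedAddCommGroup V] [InnerProductSpace ℂ V]
    (U : ℕ → V →L[ℂ] V) (a b : ℕ) : V →L[ℂ] V :=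
  (((List.range' a (b - a)).reverse.map U).prod)

theorem sub_prod_range_mul_eq_sum_of_eq_mul_add {R : Type*} [CommRing R] (L p q : ℕ → R)
    (n : ℕ) (h : ∀ i < n, L i = p i * L (i + 1) + q i) :
    L 0 - (∏ i ∈ Finset.range n, p i) * L n =
      ∑ i ∈ Finset.range n, (∏ j ∈ Finset.range i, p j) * q i := by
  induction n with
  | zero => simp
  | succ n ih =>
    rw [Finset.sum_range_succ, ← ih fun i hi => h i (by omega), h n (by omega),
      Finset.prod_range_succ]
    ring

theorem inner_apply_eq_inner_mul_add_inner_apply_sub {𝕜 E : Type*} [RCLike 𝕜]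
    [NormedAddCommGroup E] [InnerProductSpace 𝕜 E] (T : E →ₗ[𝕜] E) (φ ψ x : E) :
    inner 𝕜 φ (T x) = inner 𝕜 ψ x * inner 𝕜 φ (T ψ) + inner 𝕜 φ (T (x - inner 𝕜 ψ x • ψ)) := by
  rw [map_sub, map_smul, inner_sub_right, inner_smul_right]
  ring

section ordProd

variable {V : Type*} [NormedAddCommGroup V] [InnerProductSpace ℂ V] (U : ℕ → V →L[ℂ] V)

theorem ordProd_self (a : ℕ) : ordProd U a a = 1 := by
  simp [ordProd]

theorem ordProd_eq_ordProd_succ_mul {a b : ℕ} (h : a < b) :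
    ordProd U a b = ordProd U (a + 1) b * U a := by
  rw [ordProd, ordProd, show b - a = b - (a + 1) + 1 by omega, List.range'_succ]
  simp

theorem ordProd_succ_self (a : ℕ) : ordProd U a (a + 1) = U a := by
  rw [ordProd_eq_ordProd_succ_mul U a.lt_succ_self, ordProd_self, one_mul]

theorem inner_ordProd_eq_mul_add (ψ : V) {a b : ℕ} (h : a < b) :
    ⟪ψ, ordProd U a b ψ⟫ =
      ⟪ψ, U a ψ⟫ * ⟪ψ, ordProd U (a + 1) b ψ⟫ +
        ⟪ψ, ordProd U (a + 1) b (U a ψ - ⟪ψ, U a ψ⟫ • ψ)⟫ := by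
  rw [ordProd_eq_ordProd_succ_mul U h]
  exact inner_apply_eq_inner_mul_add_inner_apply_sub (ordProd U (a + 1) b).toLinearMap ψ ψ _

end ordProd

theorem telescoping_groundstate_projections_general
    {V : Type*} [NormedAddCommGroup V] [InnerProductSpace ℂ V]
    (ψ : V) (m : ℕ) (hm : 1 ≤ m) (U : ℕ → V →L[ℂ] V) :
    ⟪ψ, (ordProd U 0 m) ψ⟫ - ∏ i ∈ Finset.range m, ⟪ψ, U i ψ⟫ =
      ∑ i ∈ Finset.range (m - 1),
        (∏ j ∈ Finset.range i, ⟪ψ, U j ψ⟫) *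
          ⟪ψ, (ordProd U (i + 1) m) (U i ψ - ⟪ψ, U i ψ⟫ • ψ)⟫ := by
  obtain ⟨n, rfl⟩ : ∃ n, m = n + 1 := ⟨m - 1, by omega⟩
  have h := sub_prod_range_mul_eq_sum_of_eq_mul_add (fun a => ⟪ψ, ordProd U a (n + 1) ψ⟫)
    (fun a => ⟪ψ, U a ψ⟫) (fun a => ⟪ψ, ordProd U (a + 1) (n + 1) (U a ψ - ⟪ψ, U a ψ⟫ • ψ)⟫) n
    fun a ha => inner_ordProd_eq_mul_add U ψ (by omega)
  simpa only [ordProd_succ_self, ← Finset.prod_range_succ, Nat.add_sub_cancel] using h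

/-- Telescoping identity:
`⟪ψ, U_m ⋯ U_1 ψ⟫ − ∏ p_i = ∑_{i=1}^{m-1} (∏_{j<i} p_j) q_i`, where
`p_i = ⟪ψ, U_i ψ⟫` and `q_i = ⟪ψ, U_m ⋯ U_{i+1} (I − P) U_i ψ⟫`, `P = |ψ⟩⟨ψ|`.
(Here the operators are indexed `0, …, m-1`.) -/
theorem telescoping_groundstate_projections
    {V : Type*} [NormedAddCommGroup V] [InnerProductSpace ℂ V] [FiniteDimensional ℂ V]
    (ψ : V) (hψ : ‖ψ‖ = 1) (m : ℕ) (hm : 1 ≤ m) (U : ℕ → V →L[ℂ] V) :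
    ⟪ψ, (ordProd U 0 m) ψ⟫ - ∏ i ∈ Finset.range m, ⟪ψ, U i ψ⟫ =
      ∑ i ∈ Finset.range (m - 1),
        (∏ j ∈ Finset.range i, ⟪ψ, U j ψ⟫) *
          ⟪ψ, (ordProd U (i + 1) m) (U i ψ - ⟪ψ, U i ψ⟫ • ψ)⟫ :=
  telescoping_groundstate_projections_general ψ m hm U
end

section
/- Let V be a finite-dimensional complex inner product space, ψ ∈ V a unit vector, and let U₁, …, U_m be unitary operators on V (m ≥ 1). Suppose there is a complex number w with |w| = 1 and a real δ ≥ 0 such that |⟨ψ, U_i ψ⟩ − w| ≤ δ for every i. Then |⟨ψ, U_m U_{m−1} ⋯ U₁ ψ⟩ − w^m| ≤ (m − 1) √(2δ) + δ m e^{δ m}. -/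
open scoped ComplexInnerProductSpace

lemma ordProd_zero_succ {V : Type*} [NormedAddCommGroup V] [InnerProductSpace ℂ V]
    (U : ℕ → V →L[ℂ] V) (k : ℕ) :
    ordProd U 0 (k + 1) = U k * ordProd U 0 k := by
  unfold ordProd
  simp [List.range'_concat]

lemma close_vec {V : Type*} [NormedAddCommGroup V] [InnerProductSpace ℂ V]
    (ψ x : V) (hψ : ‖ψ‖ = 1) (hx : ‖x‖ = 1) (w : ℂ) (hw : ‖w‖ = 1)
    (δ : ℝ) (h : ‖⟪ψ, x⟫ - w‖ ≤ δ) :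
    ‖x - w • ψ‖ ≤ Real.sqrt (2 * δ) := by
  have hww : (starRingEnd ℂ w) * w = 1 := by
    have h1 : (starRingEnd ℂ w) * w = (‖w‖ : ℂ) ^ 2 := RCLike.conj_mul w
    rw [h1, hw]; norm_num
  have hre : (1 : ℝ) - δ ≤ Complex.re ((starRingEnd ℂ w) * ⟪ψ, x⟫) := by
    have h1 : (starRingEnd ℂ w) * ⟪ψ, x⟫ = 1 + (starRingEnd ℂ w) * (⟪ψ, x⟫ - w) := by
      rw [mul_sub, hww]; ring
    have h2 : |Complex.re ((starRingEnd ℂ w) * (⟪ψ, x⟫ - w))| ≤ δ := by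
      calc |Complex.re ((starRingEnd ℂ w) * (⟪ψ, x⟫ - w))|
          ≤ ‖(starRingEnd ℂ w) * (⟪ψ, x⟫ - w)‖ := Complex.abs_re_le_norm _
        _ = ‖(starRingEnd ℂ w)‖ * ‖⟪ψ, x⟫ - w‖ := norm_mul _ _
        _ = ‖⟪ψ, x⟫ - w‖ := by rw [RCLike.norm_conj, hw, one_mul]
        _ ≤ δ := h
    rw [h1]
    have := abs_le.mp h2
    simp only [Complex.add_re, Complex.one_re]
    linarith [this.1]
  have hsq : ‖x - w • ψ‖ ^ 2 ≤ 2 * δ := by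
    have hexp := @norm_sub_sq ℂ _ _ _ _ x (w • ψ)
    have hinner : RCLike.re ⟪x, w • ψ⟫ = Complex.re ((starRingEnd ℂ w) * ⟪ψ, x⟫) := by
      rw [inner_smul_right]
      have : ⟪x, ψ⟫ = starRingEnd ℂ ⟪ψ, x⟫ := (inner_conj_symm x ψ).symm
      rw [this]
      have : w * starRingEnd ℂ ⟪ψ, x⟫ = starRingEnd ℂ ((starRingEnd ℂ w) * ⟪ψ, x⟫) := by
        rw [map_mul]; simp
      rw [this]
      simp only [RCLike.re_to_complex, Complex.conj_re]
    have hwψ : ‖w • ψ‖ = 1 := by rw [norm_smul, hw, hψ, one_mul]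
    rw [hexp, hinner, hx, hwψ]
    nlinarith [hre]
  calc ‖x - w • ψ‖ = Real.sqrt (‖x - w • ψ‖ ^ 2) := (Real.sqrt_sq (norm_nonneg _)).symm
    _ ≤ Real.sqrt (2 * δ) := Real.sqrt_le_sqrt hsq

/-- If `U_1, …, U_m` are unitaries, `ψ` is a unit vector, `|w| = 1`,
and `|⟪ψ, U_i ψ⟫ − w| ≤ δ` for every `i`, then
`|⟪ψ, U_m ⋯ U_1 ψ⟫ − w^m| ≤ (m − 1)√(2δ) + δ m e^{δ m}`.
(Here the operators are indexed `0, …, m-1`.) -/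
theorem expectation_of_product_close_to_power
    {V : Type*} [NormedAddCommGroup V] [InnerProductSpace ℂ V] [FiniteDimensional ℂ V]
    (ψ : V) (hψ : ‖ψ‖ = 1) (m : ℕ) (hm : 1 ≤ m)
    (U : ℕ → V →L[ℂ] V) (hU : ∀ i < m, U i ∈ unitary (V →L[ℂ] V))
    (w : ℂ) (hw : ‖w‖ = 1) (δ : ℝ) (hδ : 0 ≤ δ)
    (hclose : ∀ i < m, ‖⟪ψ, U i ψ⟫ - w‖ ≤ δ) :
    ‖⟪ψ, (ordProd U 0 m) ψ⟫ - w ^ m‖ ≤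
      ((m : ℝ) - 1) * Real.sqrt (2 * δ) + δ * m * Real.exp (δ * m) := by
  have _i : CompleteSpace V := FiniteDimensional.complete ℂ V
  set s := Real.sqrt (2 * δ) with hs
  have hs0 : 0 ≤ s := Real.sqrt_nonneg _
  have hnormU : ∀ i < m, ∀ v : V, ‖U i v‖ = ‖v‖ := fun i hi v =>
    ContinuousLinearMap.norm_map_of_mem_unitary (hU i hi) v
  have hP : ∀ k ≤ m, ‖(ordProd U 0 k) ψ‖ = 1 := by
    intro k
    induction k with
    | zero => intro _; simp [ordProd, hψ]
    | succ k ih =>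
      intro hk
      rw [ordProd_zero_succ, ContinuousLinearMap.mul_apply,
        hnormU k (Nat.lt_of_succ_le hk)]
      exact ih (le_trans (Nat.le_succ k) hk)
  have hvec : ∀ i < m, ‖U i ψ - w • ψ‖ ≤ s := fun i hi =>
    close_vec ψ (U i ψ) hψ (by rw [hnormU i hi, hψ]) w hw δ (hclose i hi)
  have hadj : ∀ i < m,
      ‖(ContinuousLinearMap.adjoint (U i)) ψ - (starRingEnd ℂ w) • ψ‖ ≤ s := by
    intro i hi
    have h1 : U i ((ContinuousLinearMap.adjoint (U i)) ψ - (starRingEnd ℂ w) • ψ)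
        = ψ - (starRingEnd ℂ w) • (U i ψ) := by
      rw [map_sub, map_smul]
      congr 1
      have hmul := Unitary.mul_star_self_of_mem (hU i hi)
      rw [ContinuousLinearMap.star_eq_adjoint] at hmul
      calc U i ((ContinuousLinearMap.adjoint (U i)) ψ)
          = (U i * ContinuousLinearMap.adjoint (U i)) ψ := rfl
        _ = ψ := by rw [hmul]; rfl
    have hww : w * (starRingEnd ℂ w) = 1 := by
      have h1 : (starRingEnd ℂ w) * w = (‖w‖ : ℂ) ^ 2 := RCLike.conj_mul w
      rw [mul_comm, h1, hw]; norm_num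
    have h3 : w • (ψ - (starRingEnd ℂ w) • U i ψ) = w • ψ - U i ψ := by
      rw [smul_sub, smul_smul, hww, one_smul]
    have h2 : ‖ψ - (starRingEnd ℂ w) • U i ψ‖ = ‖U i ψ - w • ψ‖ := by
      calc ‖ψ - (starRingEnd ℂ w) • U i ψ‖
          = ‖w‖ * ‖ψ - (starRingEnd ℂ w) • U i ψ‖ := by rw [hw, one_mul]
        _ = ‖w • (ψ - (starRingEnd ℂ w) • U i ψ)‖ := (norm_smul _ _).symm
        _ = ‖w • ψ - U i ψ‖ := by rw [h3]
        _ = ‖U i ψ - w • ψ‖ := norm_sub_rev _ _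
    rw [← hnormU i hi, h1, h2]
    exact hvec i hi
  have hstep : ∀ i < m, ∀ P : V →L[ℂ] V, ‖P ψ‖ = 1 →
      ‖⟪ψ, (U i) (P ψ)⟫ - w * ⟪ψ, P ψ⟫‖ ≤ δ + s := by
    intro i hi P hPψ
    set a : ℂ := ⟪ψ, P ψ⟫ with ha
    set x : V := (ContinuousLinearMap.adjoint (U i)) ψ - (starRingEnd ℂ w) • ψ with hx
    have hid : ⟪ψ, (U i) (P ψ)⟫ - w * a = ⟪x, P ψ⟫ := by
      rw [hx, inner_sub_left, ContinuousLinearMap.adjoint_inner_left, inner_smul_left]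
      simp [ha]
    set r : V := P ψ - a • ψ with hr
    have hdecomp : ⟪x, P ψ⟫ = a * ⟪x, ψ⟫ + ⟪x, r⟫ := by
      rw [hr, inner_sub_right, inner_smul_right]; ring
    have hψψ : ⟪ψ, ψ⟫ = (1 : ℂ) := by
      rw [inner_self_eq_norm_sq_to_K, hψ]; norm_num
    have hxψ : ⟪x, ψ⟫ = ⟪ψ, U i ψ⟫ - w := by
      rw [hx, inner_sub_left, ContinuousLinearMap.adjoint_inner_left, inner_smul_left]
      rw [hψψ]
      simp
    have hxn : ‖⟪x, ψ⟫‖ ≤ δ := by rw [hxψ]; exact hclose i hi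
    have han : ‖a‖ ≤ 1 := by
      calc ‖a‖ ≤ ‖ψ‖ * ‖P ψ‖ := norm_inner_le_norm _ _
        _ = 1 := by rw [hψ, hPψ, one_mul]
    have hrn : ‖r‖ ≤ 1 := by
      have haa : RCLike.re ⟪P ψ, a • ψ⟫ = ‖a‖ ^ 2 := by
        rw [inner_smul_right]
        have h1 : ⟪P ψ, ψ⟫ = starRingEnd ℂ a := by rw [ha, ← inner_conj_symm]
        rw [h1]
        have h2 : a * starRingEnd ℂ a = ((‖a‖ : ℂ)) ^ 2 := RCLike.mul_conj a
        rw [h2, ← Complex.ofReal_pow]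
        exact Complex.ofReal_re _
      have h2 : ‖r‖ ^ 2 = 1 - ‖a‖ ^ 2 := by
        have hexp := @norm_sub_sq ℂ _ _ _ _ (P ψ) (a • ψ)
        rw [hr, hexp, haa, hPψ, norm_smul, hψ]
        ring
      nlinarith [norm_nonneg r, norm_nonneg a]
    have hxb : ‖x‖ ≤ s := hadj i hi
    calc ‖⟪ψ, (U i) (P ψ)⟫ - w * a‖ = ‖a * ⟪x, ψ⟫ + ⟪x, r⟫‖ := by rw [hid, hdecomp]
      _ ≤ ‖a * ⟪x, ψ⟫‖ + ‖⟪x, r⟫‖ := norm_add_le _ _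
      _ ≤ ‖a‖ * ‖⟪x, ψ⟫‖ + ‖x‖ * ‖r‖ := by
          rw [norm_mul]
          gcongr
          exact norm_inner_le_norm _ _
      _ ≤ 1 * δ + s * 1 := by gcongr
      _ = δ + s := by ring
  have main : ∀ k, 1 ≤ k → k ≤ m →
      ‖⟪ψ, (ordProd U 0 k) ψ⟫ - w ^ k‖ ≤ δ * (k : ℝ) + s * ((k : ℝ) - 1) := by
    intro k
    induction k with
    | zero => intro h; exact absurd h (by norm_num)
    | succ k ih =>
      intro _ hk1
      by_cases hk : k = 0
      · subst hk
        have h1 : ordProd U 0 1 = U 0 := by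
          rw [ordProd_zero_succ]
          have : ordProd U 0 0 = 1 := by simp [ordProd]
          rw [this, mul_one]
        rw [h1, pow_one]
        have := hclose 0 (by omega)
        push_cast
        linarith
      · have hk1' : 1 ≤ k := Nat.one_le_iff_ne_zero.mpr hk
        have ihk := ih hk1' (le_trans (Nat.le_succ k) hk1)
        have hstep' := hstep k (Nat.lt_of_succ_le hk1) (ordProd U 0 k)
          (hP k (le_trans (Nat.le_succ k) hk1))
        rw [ordProd_zero_succ]
        have expand : ⟪ψ, (U k * ordProd U 0 k) ψ⟫ - w ^ (k + 1)
            = (⟪ψ, (U k) ((ordProd U 0 k) ψ)⟫ - w * ⟪ψ, (ordProd U 0 k) ψ⟫)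
              + w * (⟪ψ, (ordProd U 0 k) ψ⟫ - w ^ k) := by
          rw [ContinuousLinearMap.mul_apply, pow_succ]
          ring
        rw [expand]
        calc ‖_ + w * (⟪ψ, (ordProd U 0 k) ψ⟫ - w ^ k)‖
            ≤ ‖⟪ψ, (U k) ((ordProd U 0 k) ψ)⟫ - w * ⟪ψ, (ordProd U 0 k) ψ⟫‖
              + ‖w * (⟪ψ, (ordProd U 0 k) ψ⟫ - w ^ k)‖ := norm_add_le _ _
          _ ≤ (δ + s) + 1 * (δ * (k : ℝ) + s * ((k : ℝ) - 1)) := by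
              rw [norm_mul, hw]
              gcongr
          _ ≤ δ * ((k : ℕ) + 1 : ℝ) + s * (((k : ℕ) + 1 : ℝ) - 1) := by
              push_cast; ring_nf; linarith
          _ = δ * (((k + 1 : ℕ)) : ℝ) + s * ((((k + 1 : ℕ)) : ℝ) - 1) := by push_cast; ring
  have hmain := main m hm le_rfl
  have h1 : (1 : ℝ) ≤ Real.exp (δ * m) := Real.one_le_exp (by positivity)
  have hmul : δ * (m : ℝ) * 1 ≤ δ * (m : ℝ) * Real.exp (δ * m) := by
    apply mul_le_mul_of_nonneg_left h1 (by positivity)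
  linarith
end

section
/- Let V be a finite-dimensional complex inner product space, ψ ∈ V a unit vector with rank-one projection P = |ψ⟩⟨ψ|, and let U_X, U_Y be unitary operators on V. Set δ_X = (I − P) U_X ψ and δ_Y = (I − P) U_Y ψ. Then |⟨ψ, U_Y† U_X† U_Y U_X ψ⟩ − 1| ≤ 2 (‖δ_X‖² + ‖δ_Y‖²) + 4 ‖δ_X‖ ‖δ_Y‖ + ‖δ_X‖² ‖δ_Y‖². -/
open scoped ComplexInnerProductSpace

open ContinuousLinearMap in
private lemma unitary_inner_map' {V : Type*} [NormedAddCommGroup V] [InnerProductSpace ℂ V]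
    [FiniteDimensional ℂ V] (U : V →L[ℂ] V) (hU : U ∈ unitary (V →L[ℂ] V)) (u v : V) :
    ⟪U u, U v⟫ = ⟪u, v⟫ := by
  have h : adjoint U (U v) = v := by
    have h2 : (star U * U) v = (1 : V →L[ℂ] V) v := by rw [hU.1]
    simpa [star_eq_adjoint, mul_apply] using h2
  rw [← adjoint_inner_right, h]

private lemma unitary_norm_map' {V : Type*} [NormedAddCommGroup V] [InnerProductSpace ℂ V]
    [FiniteDimensional ℂ V] (U : V →L[ℂ] V) (hU : U ∈ unitary (V →L[ℂ] V)) (v : V) :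
    ‖U v‖ = ‖v‖ := by
  have h := unitary_inner_map' U hU v v
  rw [inner_self_eq_norm_sq_to_K, inner_self_eq_norm_sq_to_K] at h
  have h2 : ‖U v‖ ^ 2 = ‖v‖ ^ 2 := by exact_mod_cast h
  nlinarith [norm_nonneg (U v), norm_nonneg v]

private lemma pyth' {V : Type*} [NormedAddCommGroup V] [InnerProductSpace ℂ V]
    {ψ : V} (hψ : ‖ψ‖ = 1) (c : ℂ) {δ : V} (h : ⟪ψ, δ⟫ = 0) :
    ‖c • ψ + δ‖ ^ 2 = ‖c‖ ^ 2 + ‖δ‖ ^ 2 := by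
  have h2 := norm_add_sq_eq_norm_sq_add_norm_sq_of_inner_eq_zero (c • ψ) δ
    (by rw [inner_smul_left, h, mul_zero])
  rw [norm_smul, hψ, mul_one] at h2
  nlinarith

open ContinuousLinearMap in
private lemma cross_bound' {V : Type*} [NormedAddCommGroup V] [InnerProductSpace ℂ V]
    [FiniteDimensional ℂ V] (ψ δ : V) (hψ : ‖ψ‖ = 1) (U : V →L[ℂ] V)
    (hU : U ∈ unitary (V →L[ℂ] V)) (hδ : ⟪ψ, δ⟫ = 0) :
    ‖⟪ψ, U δ⟫‖ ≤ ‖U ψ - ⟪ψ, U ψ⟫ • ψ‖ * ‖δ‖ := by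
  set c := ⟪ψ, U ψ⟫ with hc
  set ε := adjoint U ψ - (starRingEnd ℂ) c • ψ with hε
  have hψψ : ⟪ψ, ψ⟫ = 1 := by rw [inner_self_eq_norm_sq_to_K, hψ]; norm_num
  have hadj : ‖adjoint U ψ‖ = 1 := by
    rw [← star_eq_adjoint, unitary_norm_map' _ (Unitary.star_mem hU), hψ]
  have hnU : ‖U ψ‖ = 1 := by rw [unitary_norm_map' _ hU, hψ]
  have hinner : ⟪ψ, adjoint U ψ⟫ = (starRingEnd ℂ) c := by
    rw [adjoint_inner_right, ← inner_conj_symm]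
  have hoε : ⟪ψ, ε⟫ = 0 := by
    rw [hε, inner_sub_right, hinner, inner_smul_right, hψψ, mul_one, sub_self]
  have hoδ' : ⟪ψ, U ψ - c • ψ⟫ = 0 := by
    rw [inner_sub_right, inner_smul_right, hψψ, mul_one, sub_self]
  have hεnorm : ‖ε‖ = ‖U ψ - c • ψ‖ := by
    have e1 : ‖ε‖ ^ 2 = 1 - ‖c‖ ^ 2 := by
      have := pyth' hψ ((starRingEnd ℂ) c) hoε
      rw [show (starRingEnd ℂ) c • ψ + ε = adjoint U ψ by rw [hε]; abel, hadj] at this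
      rw [RCLike.norm_conj] at this
      nlinarith
    have e2 : ‖U ψ - c • ψ‖ ^ 2 = 1 - ‖c‖ ^ 2 := by
      have := pyth' hψ c hoδ'
      rw [show c • ψ + (U ψ - c • ψ) = U ψ by abel, hnU] at this
      nlinarith
    nlinarith [norm_nonneg ε, norm_nonneg (U ψ - c • ψ)]
  have hkey : ⟪ψ, U δ⟫ = ⟪ε, δ⟫ := by
    rw [hε, inner_sub_left, inner_smul_left, hδ, mul_zero, sub_zero, adjoint_inner_left]
  rw [hkey, ← hεnorm]
  exact norm_inner_le_norm ε δ

set_option maxHeartbeats 1000000 in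
theorem commutator_loop_expectation_bound
    {V : Type*} [NormedAddCommGroup V] [InnerProductSpace ℂ V] [FiniteDimensional ℂ V]
    (ψ : V) (hψ : ‖ψ‖ = 1) (UX UY : V →L[ℂ] V)
    (hUX : UX ∈ unitary (V →L[ℂ] V)) (hUY : UY ∈ unitary (V →L[ℂ] V))
    (δX δY : V)
    (hδX : δX = UX ψ - ⟪ψ, UX ψ⟫ • ψ) (hδY : δY = UY ψ - ⟪ψ, UY ψ⟫ • ψ) :
    ‖⟪ψ, (star UY * star UX * UY * UX) ψ⟫ - 1‖ ≤
      2 * (‖δX‖ ^ 2 + ‖δY‖ ^ 2) + 4 * ‖δX‖ * ‖δY‖ + ‖δX‖ ^ 2 * ‖δY‖ ^ 2 := by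
  have hψψ : ⟪ψ, ψ⟫ = 1 := by rw [inner_self_eq_norm_sq_to_K, hψ]; norm_num
  set a := ⟪ψ, UX ψ⟫ with ha
  set b := ⟪ψ, UY ψ⟫ with hb
  have hoX : ⟪ψ, δX⟫ = 0 := by
    rw [hδX, inner_sub_right, inner_smul_right, hψψ, mul_one, sub_self]
  have hoY : ⟪ψ, δY⟫ = 0 := by
    rw [hδY, inner_sub_right, inner_smul_right, hψψ, mul_one, sub_self]
  have hXψ : UX ψ = a • ψ + δX := by rw [hδX]; abel
  have hYψ : UY ψ = b • ψ + δY := by rw [hδY]; abel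
  have hnUX : ‖UX ψ‖ = 1 := by rw [unitary_norm_map' _ hUX, hψ]
  have hnUY : ‖UY ψ‖ = 1 := by rw [unitary_norm_map' _ hUY, hψ]
  have hx2 : ‖δX‖ ^ 2 = 1 - ‖a‖ ^ 2 := by
    have := pyth' hψ a hoX
    rw [← hXψ, hnUX] at this; nlinarith
  have hy2 : ‖δY‖ ^ 2 = 1 - ‖b‖ ^ 2 := by
    have := pyth' hψ b hoY
    rw [← hYψ, hnUY] at this; nlinarith
  have hnUYδX : ‖UY δX‖ = ‖δX‖ := unitary_norm_map' _ hUY δX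
  have hnUXδY : ‖UX δY‖ = ‖δY‖ := unitary_norm_map' _ hUX δY
  have key : ⟪ψ, (star UY * star UX * UY * UX) ψ⟫ = ⟪UX (UY ψ), UY (UX ψ)⟫ := by
    simp only [ContinuousLinearMap.mul_apply, ContinuousLinearMap.star_eq_adjoint,
      ContinuousLinearMap.adjoint_inner_right]
  have h1 : UY (UX ψ) = (a * b) • ψ + (a • δY + UY δX) := by
    rw [hXψ, map_add, map_smul, hYψ]; module
  have h2 : UX (UY ψ) = (a * b) • ψ + (b • δX + UX δY) := by
    rw [hYψ, map_add, map_smul, hXψ]; module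
  set p := a * b with hp
  set u := b • δX + UX δY with hu
  set w := a • δY + UY δX with hw
  have expand : ⟪UX (UY ψ), UY (UX ψ)⟫ - 1 =
      ((starRingEnd ℂ) p * p - 1) + ((starRingEnd ℂ) p * ⟪ψ, w⟫ + p * ⟪u, ψ⟫ + ⟪u, w⟫) := by
    rw [h1, h2]
    simp only [inner_add_left, inner_add_right, inner_smul_left, inner_smul_right, hψψ]
    ring
  -- bounds
  have hwψ : ⟪ψ, w⟫ = ⟪ψ, UY δX⟫ := by
    rw [hw, inner_add_right, inner_smul_right, hoY, mul_zero, zero_add]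
  have hoX' : ⟪δX, ψ⟫ = 0 := by rw [← inner_conj_symm δX ψ, hoX, map_zero]
  have huψ0 : ⟪u, ψ⟫ = (starRingEnd ℂ) ⟪ψ, UX δY⟫ := by
    rw [hu, inner_add_left, inner_smul_left, hoX', mul_zero, zero_add]
    exact (inner_conj_symm (UX δY) ψ).symm
  have cb1 : ‖⟪ψ, UY δX⟫‖ ≤ ‖δY‖ * ‖δX‖ := by
    have h := cross_bound' ψ δX hψ UY hUY hoX
    rwa [← hδY] at h
  have cb2 : ‖⟪ψ, UX δY⟫‖ ≤ ‖δX‖ * ‖δY‖ := by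
    have h := cross_bound' ψ δY hψ UX hUX hoY
    rwa [← hδX] at h
  have hna : ‖a‖ ≤ 1 := by
    calc ‖a‖ ≤ ‖ψ‖ * ‖UX ψ‖ := norm_inner_le_norm ψ (UX ψ)
    _ = 1 := by rw [hψ, hnUX, mul_one]
  have hnb : ‖b‖ ≤ 1 := by
    calc ‖b‖ ≤ ‖ψ‖ * ‖UY ψ‖ := norm_inner_le_norm ψ (UY ψ)
    _ = 1 := by rw [hψ, hnUY, mul_one]
  have hnp : ‖p‖ ≤ 1 := by
    rw [hp, norm_mul]
    exact mul_le_one₀ hna (norm_nonneg b) hnb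
  have hterm1 : ‖(starRingEnd ℂ) p * p - 1‖ ≤ ‖δX‖ ^ 2 + ‖δY‖ ^ 2 := by
    have hcm : (starRingEnd ℂ) p * p = ((‖p‖ ^ 2 : ℝ) : ℂ) := by
      rw [RCLike.conj_mul]; norm_cast
    rw [hcm, show ((‖p‖ ^ 2 : ℝ) : ℂ) - 1 = (((‖p‖ ^ 2 - 1 : ℝ)) : ℂ) by push_cast; ring,
      Complex.norm_real, Real.norm_eq_abs, abs_of_nonpos (by nlinarith [norm_nonneg p])]
    have : ‖p‖ ^ 2 = ‖a‖ ^ 2 * ‖b‖ ^ 2 := by rw [hp, norm_mul]; ring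
    nlinarith [norm_nonneg a, norm_nonneg b, sq_nonneg (‖a‖ * ‖b‖)]
  have hnu : ‖u‖ ≤ ‖δX‖ + ‖δY‖ := by
    calc ‖u‖ ≤ ‖b • δX‖ + ‖UX δY‖ := norm_add_le _ _
    _ = ‖b‖ * ‖δX‖ + ‖δY‖ := by rw [norm_smul, hnUXδY]
    _ ≤ ‖δX‖ + ‖δY‖ := by nlinarith [norm_nonneg δX]
  have hnw : ‖w‖ ≤ ‖δY‖ + ‖δX‖ := by
    calc ‖w‖ ≤ ‖a • δY‖ + ‖UY δX‖ := norm_add_le _ _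
    _ = ‖a‖ * ‖δY‖ + ‖δX‖ := by rw [norm_smul, hnUYδX]
    _ ≤ ‖δY‖ + ‖δX‖ := by nlinarith [norm_nonneg δY]
  have huw : ‖⟪u, w⟫‖ ≤ (‖δX‖ + ‖δY‖) * (‖δY‖ + ‖δX‖) := by
    calc ‖⟪u, w⟫‖ ≤ ‖u‖ * ‖w‖ := norm_inner_le_norm u w
    _ ≤ (‖δX‖ + ‖δY‖) * (‖δY‖ + ‖δX‖) := by
        apply mul_le_mul hnu hnw (norm_nonneg w) (by positivity)
  rw [key, expand]
  have tri : ‖((starRingEnd ℂ) p * p - 1) + ((starRingEnd ℂ) p * ⟪ψ, w⟫ + p * ⟪u, ψ⟫ + ⟪u, w⟫)‖ ≤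
      ‖(starRingEnd ℂ) p * p - 1‖ + (‖p‖ * ‖⟪ψ, w⟫‖ + ‖p‖ * ‖⟪u, ψ⟫‖ + ‖⟪u, w⟫‖) := by
    calc _ ≤ ‖(starRingEnd ℂ) p * p - 1‖ + ‖(starRingEnd ℂ) p * ⟪ψ, w⟫ + p * ⟪u, ψ⟫ + ⟪u, w⟫‖ :=
          norm_add_le _ _
    _ ≤ _ := by
        gcongr
        calc ‖(starRingEnd ℂ) p * ⟪ψ, w⟫ + p * ⟪u, ψ⟫ + ⟪u, w⟫‖ ≤
            ‖(starRingEnd ℂ) p * ⟪ψ, w⟫ + p * ⟪u, ψ⟫‖ + ‖⟪u, w⟫‖ := norm_add_le _ _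
        _ ≤ ‖(starRingEnd ℂ) p * ⟪ψ, w⟫‖ + ‖p * ⟪u, ψ⟫‖ + ‖⟪u, w⟫‖ := by
            gcongr; exact norm_add_le _ _
        _ = ‖p‖ * ‖⟪ψ, w⟫‖ + ‖p‖ * ‖⟪u, ψ⟫‖ + ‖⟪u, w⟫‖ := by
            rw [norm_mul, norm_mul, RCLike.norm_conj]
  refine tri.trans ?_
  have e1 : ‖⟪ψ, w⟫‖ ≤ ‖δY‖ * ‖δX‖ := by rw [hwψ]; exact cb1
  have e2 : ‖⟪u, ψ⟫‖ ≤ ‖δX‖ * ‖δY‖ := by rw [huψ0, RCLike.norm_conj]; exact cb2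
  have h0p : (0:ℝ) ≤ ‖p‖ := norm_nonneg p
  nlinarith [norm_nonneg δX, norm_nonneg δY, sq_nonneg (‖δX‖ * ‖δY‖),
    mul_le_mul e1 hnp h0p (by positivity), mul_le_mul e2 hnp h0p (by positivity),
    mul_nonneg (norm_nonneg δX) (norm_nonneg δY)]
end

section
/- Let V be a finite-dimensional complex inner product space, let A be a positive semidefinite operator on V, and let B be any operator on V. Then ‖AB − BA‖ ≤ ‖A‖ · ‖B‖. -/
open scoped ComplexInnerProductSpace

/-!
Subtracting the scalar `‖A‖ / 2` from `A` does not change the commutator `AB - BA`. Since the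
spectrum of `A ≥ 0` lies in `[0, ‖A‖]`, the self-adjoint operator `A - ‖A‖ / 2` has spectrum in
`[-‖A‖ / 2, ‖A‖ / 2]`, hence norm at most `‖A‖ / 2`, and the crude bound `‖CB - BC‖ ≤ 2 ‖C‖ ‖B‖`
applied to `C = A - ‖A‖ / 2` gives `‖A‖ ‖B‖`.
-/

theorem commutator_sub_algebraMap {R A : Type*} [CommSemiring R] [Ring A] [Algebra R A]
    (a b : A) (r : R) :
    (a - algebraMap R A r) * b - b * (a - algebraMap R A r) = a * b - b * a := by
  rw [sub_mul, mul_sub, Algebra.commutes]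
  abel

theorem norm_commutator_le {A : Type*} [NonUnitalSeminormedRing A] (a b : A) :
    ‖a * b - b * a‖ ≤ 2 * ‖a‖ * ‖b‖ :=
  calc ‖a * b - b * a‖ ≤ ‖a‖ * ‖b‖ + ‖b‖ * ‖a‖ :=
        (norm_sub_le _ _).trans (add_le_add (norm_mul_le a b) (norm_mul_le b a))
    _ = 2 * ‖a‖ * ‖b‖ := by ring

namespace CStarAlgebra

variable {A : Type*} [CStarAlgebra A] [PartialOrder A] [StarOrderedRing A]

theorem norm_sub_algebraMap_half_norm_le {a : A} (ha : 0 ≤ a) :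
    ‖a - algebraMap ℝ A (‖a‖ / 2)‖ ≤ ‖a‖ / 2 := by
  nontriviality A
  have hcfc : a - algebraMap ℝ A (‖a‖ / 2) = cfc (fun x : ℝ ↦ x - ‖a‖ / 2) a := by
    rw [cfc_sub _ _ a, cfc_id' ℝ a, cfc_const _ a]
  rw [hcfc]
  refine norm_cfc_le (by positivity) fun x hx ↦ ?_
  have hx₀ : 0 ≤ x := spectrum_nonneg_of_nonneg ha hx
  have hx₁ : x ≤ ‖a‖ := (Real.le_norm_self x).trans (spectrum.norm_le_norm_of_mem hx)
  rw [Real.norm_eq_abs, abs_le]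
  constructor <;> linarith

theorem norm_commutator_le_of_nonneg {a : A} (ha : 0 ≤ a) (b : A) :
    ‖a * b - b * a‖ ≤ ‖a‖ * ‖b‖ := by
  rw [← commutator_sub_algebraMap a b (‖a‖ / 2)]
  calc _ ≤ 2 * ‖a - algebraMap ℝ A (‖a‖ / 2)‖ * ‖b‖ := norm_commutator_le _ _
    _ ≤ 2 * (‖a‖ / 2) * ‖b‖ := by gcongr; exact norm_sub_algebraMap_half_norm_le ha
    _ = ‖a‖ * ‖b‖ := by ring

end CStarAlgebra

theorem ContinuousLinearMap.nonneg_of_isSelfAdjoint_of_re_inner_nonneg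
    {𝕜 E : Type*} [RCLike 𝕜] [NormedAddCommGroup E] [InnerProductSpace 𝕜 E] [CompleteSpace E]
    {T : E →L[𝕜] E} (hT : IsSelfAdjoint T) (hpos : ∀ x, 0 ≤ RCLike.re (inner 𝕜 x (T x))) :
    0 ≤ T := by
  rw [ContinuousLinearMap.nonneg_iff_isPositive, ContinuousLinearMap.isPositive_def']
  refine ⟨hT, fun x ↦ ?_⟩
  rw [ContinuousLinearMap.reApplyInnerSelf, ← ContinuousLinearMap.coe_coe, hT.isSymmetric x x]
  exact hpos x

/-- For a positive semidefinite operator `A` and any operator `B`,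
`‖AB − BA‖ ≤ ‖A‖ ‖B‖`. -/
theorem commutator_norm_le_of_positive
    {V : Type*} [NormedAddCommGroup V] [InnerProductSpace ℂ V] [FiniteDimensional ℂ V]
    (A B : V →L[ℂ] V) (hA : IsSelfAdjoint A)
    (hApos : ∀ v : V, 0 ≤ (⟪v, A v⟫).re) :
    ‖A * B - B * A‖ ≤ ‖A‖ * ‖B‖ := by
  have := FiniteDimensional.complete ℂ V
  exact CStarAlgebra.norm_commutator_le_of_nonneg
    (ContinuousLinearMap.nonneg_of_isSelfAdjoint_of_re_inner_nonneg hA hApos) B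
end

section
/- Let V be a finite-dimensional complex inner product space and let H : ℝ → (self-adjoint operators on V) be continuously differentiable. Then for every θ ∈ ℝ and every t ∈ ℝ: (∂_θ e^{itH(θ)}) e^{−itH(θ)} = i ∫₀^t e^{iuH(θ)} (∂_θ H(θ)) e^{−iuH(θ)} du, and this also equals −e^{itH(θ)} (∂_θ e^{−itH(θ)}). -/
/-!
Differentiating `u ↦ exp (u • A) * exp (u • -B)` and integrating over `[0, t]` gives the
Duhamel identity
`exp (t • A) - exp (t • B) = (∫ u in 0..t, exp (u • A) * (A - B) * exp (u • -B)) * exp (t • B)`.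
Taking `A = K θ'`, `B = K θ` and `K θ' - K θ = (θ' - θ) • dslope K θ θ'` writes the increment
of `θ' ↦ exp (t • K θ')` as `θ' - θ` times a function continuous in `θ'`; its value at `θ` is
the derivative. The formula for `exp (-(t • K θ'))` follows by differentiating the inverse.
-/

open NormedSpace Filter

theorem hasDerivAt_of_sub_eq_sub_smul {𝕜 E : Type*} [NontriviallyNormedField 𝕜]
    [NormedAddCommGroup E] [NormedSpace 𝕜 E] {f φ : 𝕜 → E} {x : 𝕜}
    (hf : ∀ y, f y - f x = (y - x) • φ y) (hφ : ContinuousAt φ x) :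
    HasDerivAt f (φ x) x := by
  rw [hasDerivAt_iff_tendsto_slope]
  refine (hφ.tendsto.mono_left nhdsWithin_le_nhds).congr' ?_
  filter_upwards [self_mem_nhdsWithin] with y hy
  rw [slope_def_module, hf, smul_smul, inv_mul_cancel₀ (sub_ne_zero.2 hy), one_smul]

theorem continuous_dslope_of_hasDerivAt {𝕜 E : Type*} [NontriviallyNormedField 𝕜]
    [NormedAddCommGroup E] [NormedSpace 𝕜 E] {f : 𝕜 → E} {f' : E} {x : 𝕜}
    (hc : Continuous f) (hd : HasDerivAt f f' x) : Continuous (dslope f x) :=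
  continuousOn_univ.1 <| (continuousOn_dslope univ_mem).2 ⟨hc.continuousOn, hd.differentiableAt⟩

theorem HasDerivAt.ringInverse {𝕜 R : Type*} [NontriviallyNormedField 𝕜] [NormedRing R]
    [HasSummableGeomSeries R] [NormedAlgebra 𝕜 R] {f : 𝕜 → R} {f' : R} {x : 𝕜}
    (hf : HasDerivAt f f' x) (hx : IsUnit (f x)) :
    HasDerivAt (fun y => Ring.inverse (f y))
      (-(Ring.inverse (f x) * f' * Ring.inverse (f x))) x := by
  obtain ⟨u, hu⟩ := hx
  have hinv : HasFDerivAt Ring.inverse _ (f x) := hu ▸ hasFDerivAt_ringInverse (𝕜 := 𝕜) u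
  rw [← hu, Ring.inverse_unit]
  exact hinv.comp_hasDerivAt x hf

section RealBanachAlgebra

variable {𝔸 : Type*} [NormedRing 𝔸] [NormedAlgebra ℝ 𝔸] [CompleteSpace 𝔸]

theorem exp_smul_mul_exp_smul_neg_sub_one (A B : 𝔸) (t : ℝ) :
    exp (t • A) * exp (t • -B) - 1 =
      ∫ u in (0:ℝ)..t, exp (u • A) * (A - B) * exp (u • -B) := by
  have hderiv : ∀ u : ℝ, HasDerivAt (fun u : ℝ => exp (u • A) * exp (u • -B))
      (exp (u • A) * (A - B) * exp (u • -B)) u := fun u =>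
    ((hasDerivAt_exp_smul_const A u).mul (hasDerivAt_exp_smul_const' (-B) u)).congr_deriv
      (by noncomm_ring)
  have hcont : Continuous fun u : ℝ => exp (u • A) * (A - B) * exp (u • -B) := by
    let +nondep : NormedAlgebra ℚ 𝔸 := .restrictScalars ℚ ℝ 𝔸
    fun_prop
  rw [intervalIntegral.integral_eq_sub_of_hasDerivAt (fun u _ => hderiv u)
    (hcont.intervalIntegrable _ _)]
  simp [exp_zero]

theorem exp_smul_neg_mul_exp_smul (B : 𝔸) (t : ℝ) : exp (t • -B) * exp (t • B) = 1 := by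
  let +nondep : NormedAlgebra ℚ 𝔸 := .restrictScalars ℚ ℝ 𝔸
  rw [smul_neg, ← exp_add_of_commute ((Commute.refl (t • B)).neg_left), neg_add_cancel, exp_zero]

theorem exp_smul_sub_exp_smul (A B : 𝔸) (t : ℝ) :
    exp (t • A) - exp (t • B) =
      (∫ u in (0:ℝ)..t, exp (u • A) * (A - B) * exp (u • -B)) * exp (t • B) := by
  rw [← exp_smul_mul_exp_smul_neg_sub_one, sub_mul, mul_assoc, exp_smul_neg_mul_exp_smul,
    mul_one, one_mul]

theorem hasDerivAt_exp_smul_comp {K : ℝ → 𝔸} {K' : 𝔸} {θ : ℝ}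
    (hc : Continuous K) (hd : HasDerivAt K K' θ) (t : ℝ) :
    HasDerivAt (fun θ' => exp (t • K θ'))
      ((∫ u in (0:ℝ)..t, exp (u • K θ) * K' * exp (u • -K θ)) * exp (t • K θ)) θ := by
  let +nondep : NormedAlgebra ℚ 𝔸 := .restrictScalars ℚ ℝ 𝔸
  have hD : Continuous (dslope K θ) := continuous_dslope_of_hasDerivAt hc hd
  have hcont : Continuous fun θ' =>
      (∫ u in (0:ℝ)..t, exp (u • K θ') * dslope K θ θ' * exp (u • -K θ)) * exp (t • K θ) := by
    fun_prop
  refine (hasDerivAt_of_sub_eq_sub_smul (fun θ' => ?_) hcont.continuousAt).congr_deriv ?_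
  · rw [exp_smul_sub_exp_smul, ← sub_smul_dslope, ← smul_mul_assoc,
      ← intervalIntegral.integral_smul]
    simp only [mul_smul_comm, smul_mul_assoc]
  · rw [dslope_same, hd.deriv]

end RealBanachAlgebra

theorem hasDerivAt_exp_neg_of_hasDerivAt_exp {𝕜 𝔸 : Type*} [NontriviallyNormedField 𝕜]
    [NormedRing 𝔸] [NormedAlgebra 𝕜 𝔸] [NormedAlgebra ℚ 𝔸] [CompleteSpace 𝔸]
    {X : 𝕜 → 𝔸} {D : 𝔸} {x : 𝕜} (h : HasDerivAt (fun y => exp (X y)) (D * exp (X x)) x) :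
    HasDerivAt (fun y => exp (-X y)) (-(exp (-X x) * D)) x := by
  simp_rw [← Ring.inverse_exp]
  refine (h.ringInverse (isUnit_exp _)).congr_deriv ?_
  rw [Ring.inverse_exp, mul_assoc, mul_assoc,
    ← exp_add_of_commute ((Commute.refl (X x)).neg_right), add_neg_cancel, exp_zero, mul_one]

theorem hasDerivAt_exp_mul_smul {𝔸 : Type*} [NormedRing 𝔸] [NormedAlgebra ℂ 𝔸]
    [CompleteSpace 𝔸] {H : ℝ → 𝔸} {H' : 𝔸} {θ : ℝ} (hc : Continuous H) (hd : HasDerivAt H H' θ)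
    (c : ℂ) (t : ℝ) :
    HasDerivAt (fun θ' => exp ((c * t) • H θ'))
      ((c • ∫ u in (0:ℝ)..t, exp ((c * u) • H θ) * H' * exp ((-(c * u)) • H θ)) *
        exp ((c * t) • H θ)) θ := by
  have hsmul : ∀ (u : ℝ) (A : 𝔸), (c * u) • A = u • c • A := fun u A => by
    rw [mul_comm, mul_smul, Complex.coe_smul]
  have h := hasDerivAt_exp_smul_comp (K := fun θ' => c • H θ') (hc.const_smul c)
    (hd.const_smul c) t
  simpa only [neg_smul, hsmul, smul_neg, ← intervalIntegral.integral_smul, mul_smul_comm,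
    smul_mul_assoc] using h

theorem duhamel_derivative_of_exponential_general
    {V : Type*} [NormedAddCommGroup V] [InnerProductSpace ℂ V] [FiniteDimensional ℂ V]
    (H H' : ℝ → V →L[ℂ] V)
    (hH : ∀ θ : ℝ, HasDerivAt H (H' θ) θ) :
    ∀ θ t : ℝ,
      HasDerivAt (fun θ' => NormedSpace.exp ((Complex.I * t) • H θ'))
        ((Complex.I • ∫ u in (0:ℝ)..t,
            NormedSpace.exp ((Complex.I * u) • H θ) * H' θ *
              NormedSpace.exp ((-(Complex.I * u)) • H θ)) *
          NormedSpace.exp ((Complex.I * t) • H θ)) θ ∧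
      HasDerivAt (fun θ' => NormedSpace.exp ((-(Complex.I * t)) • H θ'))
        (-(NormedSpace.exp ((-(Complex.I * t)) • H θ) *
          (Complex.I • ∫ u in (0:ℝ)..t,
            NormedSpace.exp ((Complex.I * u) • H θ) * H' θ *
              NormedSpace.exp ((-(Complex.I * u)) • H θ)))) θ := by
  intro θ t
  let +nondep : NormedAlgebra ℚ (V →L[ℂ] V) := .restrictScalars ℚ ℂ (V →L[ℂ] V)
  have hc : Continuous H := continuous_iff_continuousAt.2 fun θ => (hH θ).continuousAt
  have hexp := hasDerivAt_exp_mul_smul hc (hH θ) Complex.I t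
  refine ⟨hexp, ?_⟩
  simpa only [neg_smul] using hasDerivAt_exp_neg_of_hasDerivAt_exp hexp

/-- Duhamel formula for the derivative of the operator exponential:
`(∂_θ e^{itH(θ)}) e^{-itH(θ)} = i ∫₀^t e^{iuH(θ)} (∂_θ H(θ)) e^{-iuH(θ)} du`, i.e.
`∂_θ e^{itH(θ)} = (i ∫₀^t e^{iuH} H' e^{-iuH} du) e^{itH}`, and equivalently
`∂_θ e^{-itH(θ)} = -(e^{-itH} (i ∫₀^t e^{iuH} H' e^{-iuH} du))`. -/
theorem duhamel_derivative_of_exponential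
    {V : Type*} [NormedAddCommGroup V] [InnerProductSpace ℂ V] [FiniteDimensional ℂ V]
    (H H' : ℝ → V →L[ℂ] V)
    (hsa : ∀ θ : ℝ, IsSelfAdjoint (H θ))
    (hH : ∀ θ : ℝ, HasDerivAt H (H' θ) θ)
    (hH'c : Continuous H') :
    ∀ θ t : ℝ,
      HasDerivAt (fun θ' => NormedSpace.exp ((Complex.I * t) • H θ'))
        ((Complex.I • ∫ u in (0:ℝ)..t,
            NormedSpace.exp ((Complex.I * u) • H θ) * H' θ *
              NormedSpace.exp ((-(Complex.I * u)) • H θ)) *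
          NormedSpace.exp ((Complex.I * t) • H θ)) θ ∧
      HasDerivAt (fun θ' => NormedSpace.exp ((-(Complex.I * t)) • H θ'))
        (-(NormedSpace.exp ((-(Complex.I * t)) • H θ) *
          (Complex.I • ∫ u in (0:ℝ)..t,
            NormedSpace.exp ((Complex.I * u) • H θ) * H' θ *
              NormedSpace.exp ((-(Complex.I * u)) • H θ)))) θ :=
  duhamel_derivative_of_exponential_general H H' hH
end

section
/- Let V be a finite-dimensional complex inner product space and let A, B : [0, r] → (self-adjoint operators on V) be continuous. Let U, W : [0, r] → (operators on V) solve ∂_s U(s) = i A(s) U(s) and ∂_s W(s) = i B(s) W(s) with U(0) = W(0) = I (so U(s) and W(s) are unitary for all s). Then for all s ∈ [0, r]: ‖U(s) − W(s)‖ ≤ ∫₀^s ‖A(u) − B(u)‖ du. -/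
/-!
Conjugating one evolution by the other, `X(s) = U(s)⋆ W(s)` satisfies
`X' = i U⋆ (B - A) W`, whose norm is `‖A - B‖` because `U` and `W` are unitary
(`(U⋆U)' = 0`, and in finite dimension a left inverse is a right inverse).
Hence `‖U(s) - W(s)‖ = ‖X(s) - X(0)‖ ≤ ∫₀^s ‖A - B‖`.
-/

open Set Complex MeasureTheory

instance ContinuousLinearMap.isDedekindFiniteMonoid {R M : Type*} [Semiring R]
    [IsStablyFiniteRing R] [TopologicalSpace M] [AddCommMonoid M] [ContinuousAdd M]
    [Module R M] [Module.Free R M] [Module.Finite R M] : IsDedekindFiniteMonoid (M →L[R] M) :=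
  .of_injective ContinuousLinearMap.toLinearMapRingHom ContinuousLinearMap.coe_injective

theorem norm_sub_le_integral_of_hasDerivWithinAt {E : Type*} [NormedAddCommGroup E]
    [NormedSpace ℝ E] [CompleteSpace E] {f f' : ℝ → E} {g : ℝ → ℝ} {a b : ℝ} (hab : a ≤ b)
    (hf : ContinuousOn f (Icc a b)) (hf' : ∀ t ∈ Ioo a b, HasDerivWithinAt f (f' t) (Ioi t) t)
    (hf'i : IntervalIntegrable f' volume a b)
    (hg : IntervalIntegrable g volume a b) (bound : ∀ t ∈ Ioc a b, ‖f' t‖ ≤ g t) :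
    ‖f b - f a‖ ≤ ∫ t in a..b, g t := by
  rw [← intervalIntegral.integral_eq_sub_of_hasDeriv_right_of_le hab hf hf' hf'i]
  exact intervalIntegral.norm_integral_le_of_norm_le hab (.of_forall bound) hg

section Evolution

variable {R : Type*} [CStarAlgebra R]

theorem hasDerivWithinAt_star_mul_of_schrodinger {U W : ℝ → R} {a b : R} {s : Set ℝ} {t : ℝ}
    (ha : IsSelfAdjoint a) (hU : HasDerivWithinAt U (I • (a * U t)) s t)
    (hW : HasDerivWithinAt W (I • (b * W t)) s t) :
    HasDerivWithinAt (fun t ↦ star (U t) * W t) (I • (star (U t) * ((b - a) * W t))) s t := by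
  refine (hU.star.fun_mul hW).congr_deriv ?_
  simp only [star_smul, star_mul, ha.star_eq, star_def, conj_I, neg_smul, neg_mul,
    smul_mul_assoc, mul_smul_comm, mul_assoc, sub_mul, mul_sub, smul_sub]
  abel

variable {A U : ℝ → R} {a b : ℝ}

theorem star_mul_self_eq_one_of_schrodinger (hA : ∀ t ∈ Icc a b, IsSelfAdjoint (A t))
    (hUa : U a = 1) (hU : ∀ t ∈ Icc a b, HasDerivWithinAt U (I • (A t * U t)) (Icc a b) t) :
    ∀ t ∈ Icc a b, star (U t) * U t = 1 := by
  have hderiv (t) (ht : t ∈ Icc a b) :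
      HasDerivWithinAt (fun t ↦ star (U t) * U t) 0 (Icc a b) t := by
    simpa using hasDerivWithinAt_star_mul_of_schrodinger (hA t ht) (hU t ht) (hU t ht)
  intro t ht
  rw [constant_of_has_deriv_right_zero (fun t ht ↦ (hderiv t ht).continuousWithinAt)
    (fun t ht ↦ (hderiv t (Ico_subset_Icc_self ht)).mono_of_mem_nhdsWithin
      (Icc_mem_nhdsGE_of_mem ht)) t ht, hUa, star_one, one_mul]

theorem mem_unitary_of_schrodinger [IsDedekindFiniteMonoid R]
    (hA : ∀ t ∈ Icc a b, IsSelfAdjoint (A t)) (hUa : U a = 1)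
    (hU : ∀ t ∈ Icc a b, HasDerivWithinAt U (I • (A t * U t)) (Icc a b) t) :
    ∀ t ∈ Icc a b, U t ∈ unitary R := fun t ht ↦
  have h := star_mul_self_eq_one_of_schrodinger hA hUa hU t ht
  Unitary.mem_iff.2 ⟨h, mul_eq_one_comm.1 h⟩

theorem norm_star_mul_sub_le_integral_of_schrodinger {B W : ℝ → R}
    (hAc : ContinuousOn A (Icc a b)) (hBc : ContinuousOn B (Icc a b))
    (hA : ∀ t ∈ Icc a b, IsSelfAdjoint (A t))
    (hUu : ∀ t ∈ Icc a b, U t ∈ unitary R) (hWu : ∀ t ∈ Icc a b, W t ∈ unitary R)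
    (hU : ∀ t ∈ Icc a b, HasDerivWithinAt U (I • (A t * U t)) (Icc a b) t)
    (hW : ∀ t ∈ Icc a b, HasDerivWithinAt W (I • (B t * W t)) (Icc a b) t) :
    ∀ s ∈ Icc a b, ‖star (U s) * W s - star (U a) * W a‖ ≤ ∫ t in a..s, ‖A t - B t‖ := by
  have hUc : ContinuousOn U (Icc a b) := fun t ht ↦ (hU t ht).continuousWithinAt
  have hWc : ContinuousOn W (Icc a b) := fun t ht ↦ (hW t ht).continuousWithinAt
  intro s hs
  have hsub : Icc a s ⊆ Icc a b := Icc_subset_Icc_right hs.2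
  have hIoo : Ioo a s ⊆ Ico a b := fun t ht ↦ ⟨ht.1.le, ht.2.trans_le hs.2⟩
  refine norm_sub_le_integral_of_hasDerivWithinAt
    (f' := fun t ↦ I • (star (U t) * ((B t - A t) * W t))) hs.1
    ((hUc.star.mul hWc).mono hsub) (fun t ht ↦ ?deriv) ?integrable
    (((hAc.sub hBc).norm.mono hsub).intervalIntegrable_of_Icc hs.1) (fun t ht ↦ ?bound)
  case deriv =>
    have ht' := Ico_subset_Icc_self (hIoo ht)
    exact (hasDerivWithinAt_star_mul_of_schrodinger (hA t ht') (hU t ht') (hW t ht')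
      ).mono_of_mem_nhdsWithin (Icc_mem_nhdsGT_of_mem (hIoo ht))
  case integrable =>
    have : ContinuousOn (fun t ↦ I • (star (U t) * ((B t - A t) * W t))) (Icc a b) := by
      fun_prop
    exact (this.mono hsub).intervalIntegrable_of_Icc hs.1
  case bound =>
    have ht' : t ∈ Icc a b := hsub (Ioc_subset_Icc_self ht)
    rw [norm_smul, norm_I, one_mul,
      CStarRing.norm_mem_unitary_mul _ (Unitary.star_mem (hUu t ht')),
      CStarRing.norm_mul_mem_unitary _ (hWu t ht'), norm_sub_rev]

theorem norm_sub_le_integral_of_schrodinger [IsDedekindFiniteMonoid R] {B W : ℝ → R}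
    (hAc : ContinuousOn A (Icc a b)) (hBc : ContinuousOn B (Icc a b))
    (hA : ∀ t ∈ Icc a b, IsSelfAdjoint (A t)) (hB : ∀ t ∈ Icc a b, IsSelfAdjoint (B t))
    (hUa : U a = 1) (hWa : W a = 1)
    (hU : ∀ t ∈ Icc a b, HasDerivWithinAt U (I • (A t * U t)) (Icc a b) t)
    (hW : ∀ t ∈ Icc a b, HasDerivWithinAt W (I • (B t * W t)) (Icc a b) t) :
    ∀ s ∈ Icc a b, ‖U s - W s‖ ≤ ∫ t in a..s, ‖A t - B t‖ := by
  have hUu := mem_unitary_of_schrodinger hA hUa hU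
  have hWu := mem_unitary_of_schrodinger hB hWa hW
  intro s hs
  calc ‖U s - W s‖ = ‖star (U s) * (U s - W s)‖ :=
        (CStarRing.norm_mem_unitary_mul _ (Unitary.star_mem (hUu s hs))).symm
    _ = ‖star (U s) * W s - star (U a) * W a‖ := by
        rw [mul_sub, Unitary.star_mul_self_of_mem (hUu s hs), hUa, hWa, star_one, one_mul,
          norm_sub_rev]
    _ ≤ _ := norm_star_mul_sub_le_integral_of_schrodinger hAc hBc hA hUu hWu hU hW s hs

end Evolution

theorem unitary_evolution_comparison_general
    {V : Type*} [NormedAddCommGroup V] [InnerProductSpace ℂ V] [FiniteDimensional ℂ V]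
    (r : ℝ)
    (A B U W : ℝ → V →L[ℂ] V)
    (hAc : ContinuousOn A (Set.Icc 0 r)) (hBc : ContinuousOn B (Set.Icc 0 r))
    (hAsa : ∀ s ∈ Set.Icc 0 r, IsSelfAdjoint (A s))
    (hBsa : ∀ s ∈ Set.Icc 0 r, IsSelfAdjoint (B s))
    (hU0 : U 0 = 1) (hW0 : W 0 = 1)
    (hU : ∀ s ∈ Set.Icc 0 r,
      HasDerivWithinAt U (Complex.I • (A s * U s)) (Set.Icc 0 r) s)
    (hW : ∀ s ∈ Set.Icc 0 r,
      HasDerivWithinAt W (Complex.I • (B s * W s)) (Set.Icc 0 r) s) :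
    ∀ s ∈ Set.Icc 0 r, ‖U s - W s‖ ≤ ∫ u in (0:ℝ)..s, ‖A u - B u‖ := by
  have : CompleteSpace V := FiniteDimensional.complete ℂ V
  exact norm_sub_le_integral_of_schrodinger hAc hBc hAsa hBsa hU0 hW0 hU hW

/-- Comparison of two quasi-adiabatic evolutions: if
`∂_s U(s) = i A(s) U(s)` and `∂_s W(s) = i B(s) W(s)` with `U(0) = W(0) = I`, for
continuous families of self-adjoint operators `A, B` (so `U(s)`, `W(s)` are unitary),
then `‖U(s) − W(s)‖ ≤ ∫₀^s ‖A(u) − B(u)‖ du`. -/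
theorem unitary_evolution_comparison
    {V : Type*} [NormedAddCommGroup V] [InnerProductSpace ℂ V] [FiniteDimensional ℂ V]
    (r : ℝ) (hr : 0 ≤ r)
    (A B U W : ℝ → V →L[ℂ] V)
    (hAc : ContinuousOn A (Set.Icc 0 r)) (hBc : ContinuousOn B (Set.Icc 0 r))
    (hAsa : ∀ s ∈ Set.Icc 0 r, IsSelfAdjoint (A s))
    (hBsa : ∀ s ∈ Set.Icc 0 r, IsSelfAdjoint (B s))
    (hU0 : U 0 = 1) (hW0 : W 0 = 1)
    (hU : ∀ s ∈ Set.Icc 0 r,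
      HasDerivWithinAt U (Complex.I • (A s * U s)) (Set.Icc 0 r) s)
    (hW : ∀ s ∈ Set.Icc 0 r,
      HasDerivWithinAt W (Complex.I • (B s * W s)) (Set.Icc 0 r) s) :
    ∀ s ∈ Set.Icc 0 r, ‖U s - W s‖ ≤ ∫ u in (0:ℝ)..s, ‖A u - B u‖ :=
  unitary_evolution_comparison_general r A B U W hAc hBc hAsa hBsa hU0 hW0 hU hW
end
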